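/- arXiv:2502.02980 — 3 statements merged into one kernel-verified Lean document; each statement's English description precedes it below -/
import Mathlib

section
/- M_{a,b,c}(q) equals the sum over plane partitions π fitting inside an a × b × c box of q^{|π|}, where |π| is the number of boxes of π; i.e., MacMahon's boxed plane partition formula holds. -/
/-!
Shifting row `i` of a plane partition in an `a × b × c` box up by `a - 1 - i` makes its columns
strictly decreasing; recording, for each `k`, how many entries of each shifted row exceed `k`
turns it into a Gelfand–Tsetlin pattern with top row `(b^a, 0^c)`, whose weight is larger by
`b * (0 + 1 + ⋯ + (a - 1))`.

Summing over the row below a top row `μ` is a multilinear sum over the rows of a Vandermonde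
determinant, and the geometric sums appearing there produce the Vandermonde determinant in one
more variable. Hence the generating function of patterns with top row `μ` of length `m`, times
`a_δ(1, q, …, q^(m-1))`, is `a_(μ+δ)(1, q, …, q^(m-1))`. For `μ = (b^a, 0^c)` the quotient of the
two Vandermonde products is `q^(b * (0 + ⋯ + (a - 1)))` times
`∏_{s < a, r < c} (1 - q^(s+r+b+1)) / (1 - q^(s+r+1))`, which telescopes into MacMahon's product.
-/

open PowerSeries Finset

/-- MacMahon's boxed plane partition generating function (0-based indices). -/
noncomputable def Mbox (a b c : ℕ) : PowerSeries ℚ :=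
  ∏ s ∈ Finset.range a, ∏ t ∈ Finset.range b, ∏ r ∈ Finset.range c,
    (1 - (PowerSeries.X : PowerSeries ℚ) ^ (s + t + r + 2)) *
      ((1 : PowerSeries ℚ) - PowerSeries.X ^ (s + t + r + 1))⁻¹

/-- Plane partitions fitting in an \`a × b × c\` box: \`a × b\` arrays of entries in
\`[0, c]\`, weakly decreasing along rows and columns. -/
def IsBoxedPP (a b c : ℕ) (π : Fin a → Fin b → ℕ) : Prop :=
  (∀ i j, π i j ≤ c) ∧
    (∀ i i' j, i ≤ i' → π i' j ≤ π i j) ∧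
    (∀ i j j', j ≤ j' → π i j' ≤ π i j)

namespace Matrix

variable {R : Type*} [CommRing R]

theorem det_vandermonde_eq_det_pow_sub {m : ℕ} (x : Fin (m + 1) → R) :
    det (vandermonde x) =
      det (of fun i j : Fin m => x i.succ ^ ((j : ℕ) + 1) - x i.castSucc ^ ((j : ℕ) + 1)) := by
  let B : Matrix (Fin (m + 1)) (Fin (m + 1)) R := of fun i j =>
    Fin.cases (x 0 ^ (j : ℕ)) (fun i => x i.succ ^ (j : ℕ) - x i.castSucc ^ (j : ℕ)) i
  have hB : det (vandermonde x) = det B :=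
    det_eq_of_forall_row_eq_smul_add_pred (fun _ => 1) (fun j => by simp [B])
      (fun i j => by simp [B])
  rw [hB, det_succ_column_zero, Fin.sum_univ_succ]
  simp [B, submatrix]

theorem det_of_pow_succ {m : ℕ} (z : Fin m → R) :
    det (of fun i j : Fin m => z i ^ ((j : ℕ) + 1)) = (∏ i, z i) * det (vandermonde z) := by
  rw [← det_mul_column]
  congr 1
  ext i j
  simp [vandermonde_apply, pow_succ']

theorem det_of_sum_finset {n ι : Type*} [Fintype n] [DecidableEq n] [DecidableEq ι]
    (A : n → Finset ι) (g : n → ι → n → R) :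
    det (of fun i j => ∑ s ∈ A i, g i s j) =
      ∑ t ∈ Fintype.piFinset A, det (of fun i j => g i (t i) j) := by
  have := (detRowAlternating (R := R) (n := n)).toMultilinearMap.map_sum_finset g A
  simp only [sum_fn] at this
  exact this

end Matrix

namespace PowerSeries

theorem X_pow_injective {R : Type*} [Semiring R] [Nontrivial R] :
    Function.Injective ((X : PowerSeries R) ^ · : ℕ → PowerSeries R) := by
  intro m n h
  simpa [coeff_X_pow] using congrArg (coeff m) h

end PowerSeries

namespace MacMahon

section Products

variable {R : Type*} [CommRing R]

theorem one_sub_pow_ne_zero {q : R} (hq : Function.Injective (q ^ · : ℕ → R)) {k : ℕ}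
    (hk : k ≠ 0) : 1 - q ^ k ≠ 0 :=
  sub_ne_zero.2 fun h => hk (hq (by simpa using h.symm))

theorem one_sub_mul_sum_Icc_pow (r : R) {A B : ℕ} (h : A ≤ B + 1) (e : ℕ) :
    (1 - r) * ∑ s ∈ Icc A B, r ^ (s + e) = r ^ (A + e) - r ^ (B + 1 + e) := by
  have hgeom := geom_sum_Ico_mul r h
  rw [← Ico_add_one_right_eq_Icc]
  simp_rw [pow_add _ _ e, ← sum_mul]
  linear_combination (-(r ^ e)) * hgeom

theorem prod_one_sub_pow_telescope (q : R) (e b : ℕ) :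
    (∏ t ∈ range b, (1 - q ^ (e + t + 1))) * (1 - q ^ e) =
      (∏ t ∈ range b, (1 - q ^ (e + t))) * (1 - q ^ (e + b)) := by
  rw [← prod_range_succ (fun t => 1 - q ^ (e + t)), prod_range_succ']
  simp [add_assoc]

theorem prod_Ioi_eq_prod_range {M : Type*} [CommMonoid M] (n : ℕ) (F : ℕ → ℕ → M) :
    ∏ i : Fin n, ∏ j ∈ Ioi i, F i j = ∏ j ∈ range n, ∏ i ∈ range j, F i j := by
  simp_rw [← filter_lt_eq_Ioi, prod_filter, Fin.lt_def]
  rw [prod_comm, ← Fin.prod_univ_eq_prod_range (fun j => ∏ i ∈ range j, F i j)]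
  refine prod_congr rfl fun j _ => ?_
  rw [Fin.prod_univ_eq_prod_range (fun i => if i < (j : ℕ) then F i j else 1), ← prod_filter]
  congr 1
  ext i
  simp only [mem_filter, mem_range]
  omega

theorem prod_pairs_range_add_mul {F G D N : ℕ → ℕ → R} {a c : ℕ} (z : R)
    (h₁ : ∀ j < a, ∀ i < j, F i j = z * G i j)
    (h₂ : ∀ r < c, ∀ i < a, F i (a + r) * D i r = G i (a + r) * N i r)
    (h₃ : ∀ r < c, ∀ i < r, F (a + i) (a + r) = G (a + i) (a + r)) :
    (∏ j ∈ range (a + c), ∏ i ∈ range j, F i j) * ∏ r ∈ range c, ∏ i ∈ range a, D i r =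
      z ^ (∑ j ∈ range a, j) * (∏ j ∈ range (a + c), ∏ i ∈ range j, G i j) *
        ∏ r ∈ range c, ∏ i ∈ range a, N i r := by
  have hsplit : ∀ H : ℕ → ℕ → R, ∏ j ∈ range (a + c), ∏ i ∈ range j, H i j =
      (∏ j ∈ range a, ∏ i ∈ range j, H i j) * (∏ r ∈ range c, ∏ i ∈ range a, H i (a + r)) *
        ∏ r ∈ range c, ∏ i ∈ range r, H (a + i) (a + r) := fun H => by
    rw [prod_range_add, mul_assoc, ← prod_mul_distrib]
    simp_rw [prod_range_add]
  have e₁ : ∏ j ∈ range a, ∏ i ∈ range j, F i j =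
      z ^ (∑ j ∈ range a, j) * ∏ j ∈ range a, ∏ i ∈ range j, G i j := by
    rw [← prod_pow_eq_pow_sum, ← prod_mul_distrib]
    refine prod_congr rfl fun j hj => ?_
    rw [prod_congr rfl fun i hi => h₁ j (mem_range.1 hj) i (mem_range.1 hi), prod_mul_distrib,
      prod_const, card_range]
  have e₂ : (∏ r ∈ range c, ∏ i ∈ range a, F i (a + r)) * ∏ r ∈ range c, ∏ i ∈ range a, D i r =
      (∏ r ∈ range c, ∏ i ∈ range a, G i (a + r)) * ∏ r ∈ range c, ∏ i ∈ range a, N i r := by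
    simp_rw [← prod_mul_distrib]
    exact prod_congr rfl fun r hr => prod_congr rfl fun i hi =>
      h₂ r (mem_range.1 hr) i (mem_range.1 hi)
  have e₃ : ∏ r ∈ range c, ∏ i ∈ range r, F (a + i) (a + r) =
      ∏ r ∈ range c, ∏ i ∈ range r, G (a + i) (a + r) :=
    prod_congr rfl fun r hr => prod_congr rfl fun i hi =>
      h₃ r (mem_range.1 hr) i (mem_range.1 hi)
  rw [hsplit F, hsplit G, e₁, e₃]
  linear_combination (z ^ (∑ j ∈ range a, j) * (∏ j ∈ range a, ∏ i ∈ range j, G i j) *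
    ∏ r ∈ range c, ∏ i ∈ range r, G (a + i) (a + r)) * e₂

end Products

section Conjugate

def conjugate (N : ℕ) (g : ℕ → ℕ) (k : ℕ) : ℕ := #{x ∈ range N | k < g x}

variable {N M : ℕ} {g : ℕ → ℕ}

theorem conjugate_le (k : ℕ) : conjugate N g k ≤ N :=
  (card_filter_le _ _).trans (card_range N).le

theorem conjugate_le_conjugate {g' : ℕ → ℕ} {k k' : ℕ} (h : ∀ x < N, k < g x → k' < g' x) :
    conjugate N g k ≤ conjugate N g' k' :=
  card_le_card fun x hx => by
    simp only [mem_filter, mem_range] at hx ⊢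
    exact ⟨hx.1, h x hx.1 hx.2⟩

theorem conjugate_eq_zero {k : ℕ} (h : ∀ x < N, g x ≤ k) : conjugate N g k = 0 := by
  simp only [conjugate, card_eq_zero, filter_eq_empty_iff, mem_range, not_lt]
  exact h

theorem conjugate_eq_self {k : ℕ} (h : ∀ x < N, k < g x) : conjugate N g k = N := by
  rw [conjugate, filter_true_of_mem fun x hx => h x (mem_range.1 hx), card_range]

theorem lt_conjugate_iff (hg : Antitone g) {j : ℕ} (hj : j < N) (k : ℕ) :
    j < conjugate N g k ↔ k < g j := by
  constructor
  · intro h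
    by_contra hk
    have hsub : {x ∈ range N | k < g x} ⊆ range j := fun x hx => by
      simp only [mem_filter, mem_range] at hx ⊢
      by_contra hxj
      exact hk (hx.2.trans_le (hg (not_lt.1 hxj)))
    have := card_le_card hsub
    rw [card_range] at this
    exact absurd h (not_lt.2 this)
  · intro h
    have hsub : range (j + 1) ⊆ {x ∈ range N | k < g x} := fun x hx => by
      simp only [mem_filter, mem_range] at hx ⊢
      exact ⟨by omega, h.trans_le (hg (by omega))⟩
    simpa [conjugate] using card_le_card hsub

theorem sum_conjugate (hM : ∀ x < N, g x ≤ M) :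
    ∑ k ∈ range M, conjugate N g k = ∑ x ∈ range N, g x := by
  simp only [conjugate, card_filter]
  rw [sum_comm]
  refine sum_congr rfl fun x hx => ?_
  rw [← card_filter, show {k ∈ range M | k < g x} = range (g x) by
    ext k
    simp only [mem_filter, mem_range]
    have := hM x (mem_range.1 hx)
    omega, card_range]

end Conjugate

section ZeroExtend

def zeroExtend {m : ℕ} (t : Fin m → ℕ) (i : ℕ) : ℕ := if h : i < m then t ⟨i, h⟩ else 0

variable {m : ℕ}

@[simp]
theorem zeroExtend_val (t : Fin m → ℕ) (i : Fin m) : zeroExtend t i = t i := dif_pos i.isLt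

theorem zeroExtend_of_le (t : Fin m → ℕ) {i : ℕ} (h : m ≤ i) : zeroExtend t i = 0 :=
  dif_neg (not_lt.2 h)

@[simp]
theorem zeroExtend_zero : zeroExtend (0 : Fin m → ℕ) = 0 := by
  funext i
  simp [zeroExtend]

theorem zeroExtend_restrict {ν : ℕ → ℕ} (hν : ∀ i, m ≤ i → ν i = 0) :
    zeroExtend (fun i : Fin m => ν i) = ν := by
  funext i
  by_cases h : i < m
  · exact dif_pos h
  · rw [zeroExtend_of_le _ (not_lt.1 h), hν i (not_lt.1 h)]

theorem antitone_zeroExtend {t : Fin m → ℕ} (ht : Antitone t) : Antitone (zeroExtend t) := by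
  intro i j hij
  by_cases hj : j < m
  · rw [zeroExtend, dif_pos hj, zeroExtend, dif_pos (hij.trans_lt hj)]
    exact ht (Fin.mk_le_mk.2 hij)
  · rw [zeroExtend_of_le t (not_lt.1 hj)]
    exact Nat.zero_le _

theorem sum_zeroExtend (t : Fin m → ℕ) : ∑ i ∈ range m, zeroExtend t i = ∑ i, t i := by
  rw [← Fin.sum_univ_eq_sum_range]
  simp

end ZeroExtend

def Interlaces (ν μ : ℕ → ℕ) : Prop := ∀ i, μ (i + 1) ≤ ν i ∧ ν i ≤ μ i

theorem Interlaces.antitone {ν μ : ℕ → ℕ} (h : Interlaces ν μ) (hμ : Antitone μ) :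
    Antitone ν := by
  intro i j hij
  rcases hij.eq_or_lt with rfl | hij
  · exact le_rfl
  · exact (h j).2.trans ((hμ hij).trans (h i).1)

def interlacing (m : ℕ) (μ : ℕ → ℕ) : Finset (Fin m → ℕ) :=
  Fintype.piFinset fun i => Icc (μ (i + 1)) (μ i)

theorem mem_interlacing {m : ℕ} {μ : ℕ → ℕ} {t : Fin m → ℕ} :
    t ∈ interlacing m μ ↔ ∀ i : Fin m, μ (i + 1) ≤ t i ∧ t i ≤ μ i := by
  simp [interlacing]

theorem interlacing_zero (m : ℕ) : interlacing m 0 = {0} := by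
  simpa [interlacing] using Fintype.piFinset_singleton (0 : Fin m → ℕ)

theorem interlaces_zeroExtend {m : ℕ} {μ : ℕ → ℕ} {t : Fin m → ℕ}
    (hμ : ∀ i, m + 1 ≤ i → μ i = 0) (ht : t ∈ interlacing m μ) :
    Interlaces (zeroExtend t) μ := by
  intro i
  by_cases hi : i < m
  · rw [zeroExtend, dif_pos hi]
    exact mem_interlacing.1 ht ⟨i, hi⟩
  · rw [zeroExtend_of_le t (not_lt.1 hi), hμ (i + 1) (by omega)]
    exact ⟨le_rfl, Nat.zero_le _⟩

/-- Row `k` of `f` is the `(k + 1)`-st row below the top row `μ` of a Gelfand–Tsetlin pattern: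
it has `m - 1 - k` entries and interlaces the row above it. -/
structure IsGTPattern (m : ℕ) (μ : ℕ → ℕ) (f : ℕ → ℕ → ℕ) : Prop where
  head_le_top : ∀ i, f 0 i ≤ μ i
  top_succ_le_head : ∀ i, μ (i + 1) ≤ f 0 i
  succ_le : ∀ k i, f (k + 1) i ≤ f k i
  le_succ : ∀ k i, f k (i + 1) ≤ f (k + 1) i
  eq_zero : ∀ k i, m ≤ k + i + 1 → f k i = 0

namespace IsGTPattern

variable {m : ℕ} {μ : ℕ → ℕ} {f : ℕ → ℕ → ℕ}

theorem antitone_diag (hf : IsGTPattern m μ f) (i : ℕ) : Antitone (f · i) :=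
  antitone_nat_of_succ_le (hf.succ_le · i)

theorem le_top (hf : IsGTPattern m μ f) (k i : ℕ) : f k i ≤ μ i :=
  (hf.antitone_diag i (Nat.zero_le k)).trans (hf.head_le_top i)

theorem top_le (hf : IsGTPattern m μ f) : ∀ k i, μ (i + k + 1) ≤ f k i
  | 0, i => hf.top_succ_le_head i
  | k + 1, i => by
    rw [show i + (k + 1) + 1 = i + 1 + k + 1 by omega]
    exact (hf.top_le k (i + 1)).trans (hf.le_succ k i)

theorem le_add (hf : IsGTPattern m μ f) : ∀ d k i, f k (i + d) ≤ f (k + d) i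
  | 0, _, _ => le_rfl
  | d + 1, k, i => (hf.le_succ k (i + d)).trans (by
    rw [show k + (d + 1) = k + 1 + d by omega]
    exact hf.le_add d (k + 1) i)

theorem tail (hf : IsGTPattern (m + 1) μ f) : IsGTPattern m (f 0) (fun k => f (k + 1)) where
  head_le_top := hf.succ_le 0
  top_succ_le_head := hf.le_succ 0
  succ_le k := hf.succ_le (k + 1)
  le_succ k := hf.le_succ (k + 1)
  eq_zero k i h := hf.eq_zero (k + 1) i (by omega)

end IsGTPattern

theorem setOf_isGTPattern_finite (m : ℕ) (μ : ℕ → ℕ) : {f | IsGTPattern m μ f}.Finite := by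
  refine Set.Finite.of_finite_image (f := fun f (k i : Fin m) => f k i) ?_ ?_
  · refine (Set.Finite.pi (ι := Fin m) fun _ =>
      Set.Finite.pi (ι := Fin m) fun i => Set.finite_Iic (μ i)).subset ?_
    rintro _ ⟨f, hf, rfl⟩
    exact fun k _ i _ => hf.le_top k i
  · intro f hf g hg hfg
    funext k i
    by_cases h : k < m ∧ i < m
    · exact congrFun (congrFun hfg ⟨k, h.1⟩) ⟨i, h.2⟩
    · rw [hf.eq_zero k i (by omega), hg.eq_zero k i (by omega)]

noncomputable def gtPatterns (m : ℕ) (μ : ℕ → ℕ) : Finset (ℕ → ℕ → ℕ) :=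
  (setOf_isGTPattern_finite m μ).toFinset

theorem mem_gtPatterns {m : ℕ} {μ : ℕ → ℕ} {f : ℕ → ℕ → ℕ} :
    f ∈ gtPatterns m μ ↔ IsGTPattern m μ f :=
  Set.Finite.mem_toFinset _

theorem gtPatterns_zero {μ : ℕ → ℕ} (hμ : ∀ i, μ i = 0) : gtPatterns 0 μ = {0} := by
  ext f
  rw [mem_gtPatterns, mem_singleton]
  constructor
  · intro hf
    funext k i
    exact hf.eq_zero k i (by omega)
  · rintro rfl
    exact ⟨fun _ => Nat.zero_le _, fun i => (hμ (i + 1)).le, fun _ _ => le_rfl,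
      fun _ _ => le_rfl, fun _ _ _ => rfl⟩

def consRow (ν : ℕ → ℕ) (g : ℕ → ℕ → ℕ) : ℕ → ℕ → ℕ
  | 0 => ν
  | k + 1 => g k

theorem IsGTPattern.consRow {m : ℕ} {μ ν : ℕ → ℕ} {g : ℕ → ℕ → ℕ}
    (hν : Interlaces ν μ) (hνm : ∀ i, m ≤ i → ν i = 0)
    (hg : IsGTPattern m ν g) : IsGTPattern (m + 1) μ (consRow ν g) where
  head_le_top i := (hν i).2
  top_succ_le_head i := (hν i).1
  succ_le
    | 0, i => hg.head_le_top i
    | k + 1, i => hg.succ_le k i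
  le_succ
    | 0, i => hg.top_succ_le_head i
    | k + 1, i => hg.le_succ k i
  eq_zero
    | 0, i, h => hνm i (by omega)
    | k + 1, i, h => hg.eq_zero k i (by omega)

def weight (m : ℕ) (f : ℕ → ℕ → ℕ) : ℕ := ∑ k ∈ range m, ∑ i ∈ range m, f k i

theorem weight_consRow {m : ℕ} {μ ν : ℕ → ℕ} {g : ℕ → ℕ → ℕ} (hνm : ν m = 0)
    (hg : IsGTPattern m μ g) :
    weight (m + 1) (consRow ν g) = ∑ i ∈ range m, ν i + weight m g := by
  have hgm : ∀ k, g k m = 0 := fun k => hg.eq_zero k m (by omega)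
  rw [weight, sum_range_succ' _ m]
  simp only [consRow]
  rw [sum_range_succ ν, hνm, sum_congr rfl fun k _ => by rw [sum_range_succ, hgm], weight]
  simp only [add_zero, add_comm]

section GenFun

variable {R : Type*} [CommRing R] (q : R)

noncomputable def gtGenFun (m : ℕ) (μ : ℕ → ℕ) : R := ∑ f ∈ gtPatterns m μ, q ^ weight m f

theorem gtGenFun_succ {m : ℕ} {μ : ℕ → ℕ} (hμ : ∀ i, m + 1 ≤ i → μ i = 0) :
    gtGenFun q (m + 1) μ =
      ∑ t ∈ interlacing m μ, q ^ (∑ i, t i) * gtGenFun q m (zeroExtend t) := by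
  simp only [gtGenFun, mul_sum, ← pow_add]
  rw [sum_sigma']
  symm
  refine sum_nbij' (fun p => consRow (zeroExtend p.1) p.2)
    (fun f => ⟨fun i => f 0 i, fun k => f (k + 1)⟩) ?_ ?_ ?_ ?_ ?_
  · rintro ⟨t, g⟩ h
    simp only [mem_sigma, mem_gtPatterns] at h ⊢
    exact h.2.consRow (interlaces_zeroExtend hμ h.1) fun i => zeroExtend_of_le t
  · intro f hf
    simp only [mem_sigma, mem_gtPatterns, mem_interlacing] at hf ⊢
    refine ⟨fun i => ⟨hf.top_succ_le_head i, hf.head_le_top i⟩, ?_⟩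
    rw [zeroExtend_restrict fun i hi => hf.eq_zero 0 i (by omega)]
    exact hf.tail
  · rintro ⟨t, g⟩ -
    simp [consRow]
  · intro f hf
    simp only [mem_gtPatterns] at hf
    funext k
    cases k with
    | zero => exact zeroExtend_restrict fun i hi => hf.eq_zero 0 i (by omega)
    | succ k => rfl
  · rintro ⟨t, g⟩ h
    simp only [mem_sigma, mem_gtPatterns] at h
    rw [weight_consRow (zeroExtend_of_le t le_rfl) h.2, sum_zeroExtend]

open Matrix in
/-- The alternant `a_(μ+δ)(1, q, …, q^(m-1))`, with `δ = (m - 1, …, 1, 0)`. -/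
def alternant (m : ℕ) (μ : ℕ → ℕ) : R :=
  det (vandermonde fun i : Fin m => q ^ (μ i + (m - 1 - i)))

theorem alternant_eq_prod (m : ℕ) (μ : ℕ → ℕ) :
    alternant q m μ =
      ∏ j ∈ range m, ∏ i ∈ range j, (q ^ (μ j + (m - 1 - j)) - q ^ (μ i + (m - 1 - i))) := by
  rw [alternant, Matrix.det_vandermonde,
    ← prod_Ioi_eq_prod_range m fun i j => q ^ (μ j + (m - 1 - j)) - q ^ (μ i + (m - 1 - i))]

open Matrix in
/-- Each summand times `q ^ (∑ i, (m - 1 - i))` is `det ((q ^ (t i + (m - 1 - i))) ^ (j + 1))`;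
the sum over `t` makes every row a geometric sum, and scaling column `j` by `1 - q ^ (j + 1)`
turns the rows into the successive differences of the rows of a Vandermonde matrix of size
`m + 1`. -/
theorem sum_interlacing_mul_alternant {m : ℕ} {μ : ℕ → ℕ} (hμ : Antitone μ) :
    (∑ t ∈ interlacing m μ, q ^ (∑ i, t i) * alternant q m (zeroExtend t)) *
        (q ^ (∑ i : Fin m, (m - 1 - (i : ℕ))) * ∏ j : Fin m, (1 - q ^ ((j : ℕ) + 1))) =
      alternant q (m + 1) μ := by
  have hterm : ∀ t : Fin m → ℕ,
      q ^ (∑ i, t i) * alternant q m (zeroExtend t) * q ^ (∑ i : Fin m, (m - 1 - (i : ℕ))) =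
        det (of fun i j : Fin m => (q ^ (t i + (m - 1 - i))) ^ ((j : ℕ) + 1)) := by
    intro t
    rw [det_of_pow_succ, prod_pow_eq_pow_sum, sum_add_distrib, pow_add]
    simp only [alternant, zeroExtend_val]
    ring
  have hentry : ∀ i j : Fin m,
      (1 - q ^ ((j : ℕ) + 1)) *
          ∑ s ∈ Icc (μ (i + 1)) (μ i), (q ^ (s + (m - 1 - i))) ^ ((j : ℕ) + 1) =
        (q ^ (μ i.succ + (m + 1 - 1 - i.succ))) ^ ((j : ℕ) + 1) -
          (q ^ (μ i.castSucc + (m + 1 - 1 - i.castSucc))) ^ ((j : ℕ) + 1) := by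
    intro i j
    simp_rw [← pow_mul, mul_comm _ ((j : ℕ) + 1), pow_mul]
    rw [one_sub_mul_sum_Icc_pow _ ((hμ (Nat.le_succ i)).trans (Nat.le_succ _))]
    congr 2 <;> simp <;> omega
  rw [← mul_assoc, sum_mul]
  simp_rw [hterm]
  rw [interlacing, ← det_of_sum_finset (fun i : Fin m => Icc (μ (i + 1)) (μ i))
      fun i s (j : Fin m) => (q ^ (s + (m - 1 - i))) ^ ((j : ℕ) + 1),
    mul_comm, ← det_mul_row, alternant, det_vandermonde_eq_det_pow_sub]
  congr 1
  ext i j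
  exact hentry i j

theorem alternant_succ_zero (m : ℕ) :
    alternant q (m + 1) 0 =
      alternant q m 0 *
        (q ^ (∑ i : Fin m, (m - 1 - (i : ℕ))) * ∏ j : Fin m, (1 - q ^ ((j : ℕ) + 1))) := by
  rw [← sum_interlacing_mul_alternant q (μ := 0) fun _ _ _ => le_rfl, interlacing_zero,
    sum_singleton]
  simp

theorem gtGenFun_mul_alternant_zero :
    ∀ {m : ℕ} {μ : ℕ → ℕ}, Antitone μ → (∀ i, m ≤ i → μ i = 0) →
      gtGenFun q m μ * alternant q m 0 = alternant q m μ
  | 0, μ, _, hμ0 => by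
    simp [gtGenFun, gtPatterns_zero fun i => hμ0 i (Nat.zero_le i), alternant, weight]
  | m + 1, μ, hμ, hμ0 => by
    rw [gtGenFun_succ q hμ0, alternant_succ_zero, ← mul_assoc, sum_mul,
      ← sum_interlacing_mul_alternant q hμ]
    congr 1
    refine sum_congr rfl fun t ht => ?_
    rw [mul_assoc, gtGenFun_mul_alternant_zero
      ((interlaces_zeroExtend hμ0 ht).antitone hμ) fun i => zeroExtend_of_le t]

end GenFun

def rect (a b : ℕ) (i : ℕ) : ℕ := if i < a then b else 0

theorem rect_antitone (a b : ℕ) : Antitone (rect a b) := by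
  intro i j hij
  unfold rect
  split_ifs <;> omega

section PlanePartition

variable {a b c : ℕ} {π : Fin a → Fin b → ℕ} {f : ℕ → ℕ → ℕ}

def shiftedRow (π : Fin a → Fin b → ℕ) (i : Fin a) (j : ℕ) : ℕ := zeroExtend (π i) j + (a - 1 - i)

def toGTPattern (π : Fin a → Fin b → ℕ) (k i : ℕ) : ℕ :=
  if h : i < a then conjugate b (shiftedRow π ⟨i, h⟩) k else 0

def ofGTPattern (a c : ℕ) (f : ℕ → ℕ → ℕ) : Fin a → Fin b → ℕ :=
  fun i j => conjugate (a + c) (f · i) j - (a - 1 - i)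

theorem toGTPattern_val (π : Fin a → Fin b → ℕ) (k : ℕ) (i : Fin a) :
    toGTPattern π k i = conjugate b (shiftedRow π i) k :=
  dif_pos i.isLt

theorem toGTPattern_of_le (π : Fin a → Fin b → ℕ) (k : ℕ) {i : ℕ} (hi : a ≤ i) :
    toGTPattern π k i = 0 :=
  dif_neg (not_lt.2 hi)

theorem antitone_shiftedRow (hπ : IsBoxedPP a b c π) (i : Fin a) : Antitone (shiftedRow π i) :=
  fun _ _ h => Nat.add_le_add_right (antitone_zeroExtend (hπ.2.2 i) h) _

theorem shiftedRow_le (hπ : IsBoxedPP a b c π) (i : Fin a) (j : ℕ) :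
    shiftedRow π i j ≤ c + (a - 1 - i) := by
  unfold shiftedRow zeroExtend
  split_ifs
  · exact Nat.add_le_add_right (hπ.1 i _) _
  · omega

theorem isGTPattern_toGTPattern (hπ : IsBoxedPP a b c π) :
    IsGTPattern (a + c) (rect a b) (toGTPattern π) where
  head_le_top i := by
    by_cases hi : i < a
    · simpa [rect, hi, toGTPattern] using conjugate_le 0
    · simp [toGTPattern_of_le π 0 (not_lt.1 hi)]
  top_succ_le_head i := by
    by_cases hi : i + 1 < a
    · rw [rect, if_pos hi, toGTPattern_val π 0 ⟨i, by omega⟩, conjugate_eq_self fun j _ => ?_]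
      simp only [shiftedRow]
      omega
    · simp [rect, hi]
  succ_le k i := by
    by_cases hi : i < a
    · rw [toGTPattern_val π _ ⟨i, hi⟩, toGTPattern_val π _ ⟨i, hi⟩]
      exact conjugate_le_conjugate fun _ _ h => by omega
    · simp [toGTPattern_of_le π _ (not_lt.1 hi)]
  le_succ k i := by
    by_cases hi : i + 1 < a
    · rw [toGTPattern_val π _ ⟨i + 1, hi⟩, toGTPattern_val π _ ⟨i, by omega⟩]
      refine conjugate_le_conjugate fun j hj h => ?_
      have hcol : π ⟨i + 1, hi⟩ ⟨j, hj⟩ ≤ π ⟨i, by omega⟩ ⟨j, hj⟩ :=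
        hπ.2.1 _ _ _ (Fin.mk_le_mk.2 (Nat.le_succ i))
      simp only [shiftedRow, zeroExtend, dif_pos hj] at h ⊢
      omega
    · simp [toGTPattern_of_le π _ (not_lt.1 hi)]
  eq_zero k i h := by
    by_cases hi : i < a
    · rw [toGTPattern_val π _ ⟨i, hi⟩]
      exact conjugate_eq_zero fun j _ => (shiftedRow_le hπ ⟨i, hi⟩ j).trans
        (show c + (a - 1 - i) ≤ k by omega)
    · exact toGTPattern_of_le π k (not_lt.1 hi)

theorem weight_toGTPattern (hπ : IsBoxedPP a b c π) :
    weight (a + c) (toGTPattern π) = ∑ i, ∑ j, π i j + b * ∑ i ∈ range a, (a - 1 - i) := by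
  have hrow : ∀ i : Fin a, ∑ k ∈ range (a + c), toGTPattern π k i =
      ∑ j, π i j + b * (a - 1 - i) := by
    intro i
    simp only [toGTPattern_val]
    rw [sum_conjugate fun j _ => (shiftedRow_le hπ i j).trans (by omega)]
    simp only [shiftedRow, sum_add_distrib, sum_zeroExtend, sum_const, card_range, smul_eq_mul]
  rw [weight, sum_comm, sum_range_add, sum_eq_zero (s := range c) fun i _ =>
    sum_eq_zero fun k _ => toGTPattern_of_le π k (by omega), add_zero,
    ← Fin.sum_univ_eq_sum_range (fun i => ∑ k ∈ range (a + c), toGTPattern π k i)]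
  simp only [hrow, sum_add_distrib, mul_sum, Fin.sum_univ_eq_sum_range (fun i => b * (a - 1 - i))]

theorem lt_ofGTPattern_iff (hf : IsGTPattern (a + c) (rect a b) f) (i : Fin a) (j : Fin b)
    (w : ℕ) : w < ofGTPattern a c f i j ↔ j < f (w + (a - 1 - i)) i := by
  rw [ofGTPattern, Nat.lt_sub_iff_add_lt]
  by_cases hw : w + (a - 1 - i) < a + c
  · exact lt_conjugate_iff (hf.antitone_diag i) hw j
  · rw [hf.eq_zero _ i (by omega)]
    simpa using (conjugate_le j).trans (not_lt.1 hw)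

theorem isBoxedPP_ofGTPattern (hf : IsGTPattern (a + c) (rect a b) f) :
    IsBoxedPP a b c (ofGTPattern (b := b) a c f) := by
  refine ⟨fun i j => ?_, fun i i' j hii' => ?_, fun i j j' hjj' => ?_⟩
  · by_contra! h
    have := (lt_ofGTPattern_iff hf i j c).1 h
    rw [hf.eq_zero _ i (by omega)] at this
    exact Nat.not_lt_zero _ this
  · refine le_of_forall_lt fun w hw => (lt_ofGTPattern_iff hf i j w).2 ?_
    have hshift := hf.le_add (i' - i) (w + (a - 1 - i')) i
    rw [show (i : ℕ) + (i' - i) = i' by omega,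
      show w + (a - 1 - i') + (i' - i) = w + (a - 1 - i) by omega] at hshift
    exact ((lt_ofGTPattern_iff hf i' j w).1 hw).trans_le hshift
  · refine le_of_forall_lt fun w hw => (lt_ofGTPattern_iff hf i j w).2 ?_
    exact (Fin.le_def.1 hjj').trans_lt ((lt_ofGTPattern_iff hf i j' w).1 hw)

theorem ofGTPattern_toGTPattern (hπ : IsBoxedPP a b c π) :
    ofGTPattern a c (toGTPattern π) = π := by
  funext i j
  refine eq_of_forall_lt_iff fun w => ?_
  rw [lt_ofGTPattern_iff (isGTPattern_toGTPattern hπ), toGTPattern_val,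
    lt_conjugate_iff (antitone_shiftedRow hπ i) j.isLt, shiftedRow, zeroExtend_val]
  omega

theorem toGTPattern_ofGTPattern (hf : IsGTPattern (a + c) (rect a b) f) :
    toGTPattern (ofGTPattern (b := b) a c f) = f := by
  funext k i
  by_cases hi : i < a
  · refine eq_of_forall_lt_iff fun j => ?_
    rw [toGTPattern_val _ k ⟨i, hi⟩]
    by_cases hj : j < b
    · rw [lt_conjugate_iff (antitone_shiftedRow (isBoxedPP_ofGTPattern hf) _) hj, shiftedRow,
        zeroExtend, dif_pos hj]
      dsimp only
      by_cases hk : k < a - 1 - i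
      · have := hf.top_le k i
        simp only [rect, if_pos (show i + k + 1 < a by omega)] at this
        omega
      · have := lt_ofGTPattern_iff hf ⟨i, hi⟩ ⟨j, hj⟩ (k - (a - 1 - i))
        dsimp only at this
        rw [Nat.sub_add_cancel (not_lt.1 hk)] at this
        omega
    · have := hf.le_top k i
      simp only [rect, if_pos hi] at this
      have := conjugate_le (N := b) (g := shiftedRow (ofGTPattern (b := b) a c f) ⟨i, hi⟩) k
      omega
  · have := hf.le_top k i
    simp only [rect, if_neg hi] at this
    rw [toGTPattern_of_le _ k (not_lt.1 hi)]
    omega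

end PlanePartition

theorem setOf_isBoxedPP_finite (a b c : ℕ) : {π | IsBoxedPP a b c π}.Finite :=
  (Set.Finite.pi (ι := Fin a) fun _ => Set.Finite.pi (ι := Fin b) fun _ =>
    Set.finite_Iic c).subset fun _ hπ i _ j _ => hπ.1 i j

noncomputable def boxedPPs (a b c : ℕ) : Finset (Fin a → Fin b → ℕ) :=
  (setOf_isBoxedPP_finite a b c).toFinset

theorem mem_boxedPPs {a b c : ℕ} {π : Fin a → Fin b → ℕ} :
    π ∈ boxedPPs a b c ↔ IsBoxedPP a b c π :=
  Set.Finite.mem_toFinset _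

section Evaluation

variable {R : Type*} [CommRing R] (q : R)

theorem sum_boxedPPs_eq_gtGenFun (a b c : ℕ) :
    ∑ π ∈ boxedPPs a b c, q ^ (∑ i, ∑ j, π i j + b * ∑ i ∈ range a, (a - 1 - i)) =
      gtGenFun q (a + c) (rect a b) :=
  sum_nbij' toGTPattern (ofGTPattern a c)
    (fun _ hπ => mem_gtPatterns.2 (isGTPattern_toGTPattern (mem_boxedPPs.1 hπ)))
    (fun _ hf => mem_boxedPPs.2 (isBoxedPP_ofGTPattern (mem_gtPatterns.1 hf)))
    (fun _ hπ => ofGTPattern_toGTPattern (mem_boxedPPs.1 hπ))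
    (fun _ hf => toGTPattern_ofGTPattern (mem_gtPatterns.1 hf))
    (fun _ hπ => by rw [weight_toGTPattern (mem_boxedPPs.1 hπ)])

theorem alternant_rect_mul (a b c : ℕ) :
    alternant q (a + c) (rect a b) * ∏ s ∈ range a, ∏ r ∈ range c, (1 - q ^ (s + r + 1)) =
      q ^ (b * ∑ i ∈ range a, (a - 1 - i)) * alternant q (a + c) 0 *
        ∏ s ∈ range a, ∏ r ∈ range c, (1 - q ^ (s + r + b + 1)) := by
  have hreflect : ∀ g : ℕ → ℕ → R, ∏ s ∈ range a, ∏ r ∈ range c, g s r =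
      ∏ r ∈ range c, ∏ i ∈ range a, g (a - 1 - i) r := fun g => by
    rw [prod_comm]
    exact prod_congr rfl fun r _ => (prod_range_reflect (g · r) a).symm
  rw [hreflect, hreflect, alternant_eq_prod, alternant_eq_prod,
    sum_range_reflect (fun i => i) a, pow_mul]
  refine prod_pairs_range_add_mul (q ^ b) (fun j hj i hi => ?_) (fun r hr i hi => ?_)
    (fun r hr i hi => ?_)
  · simp only [rect, if_pos hj, if_pos (hi.trans hj), Pi.zero_apply, zero_add]
    ring
  · simp only [rect, if_pos hi, if_neg (show ¬ a + r < a by omega), Pi.zero_apply, zero_add]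
    rw [show a + c - 1 - (a + r) = c - 1 - r by omega,
      show a + c - 1 - i = (c - 1 - r) + (a - 1 - i + r + 1) by omega]
    ring
  · simp only [rect, if_neg (show ¬ a + r < a by omega), if_neg (show ¬ a + i < a by omega),
      Pi.zero_apply]

end Evaluation

section Domain

variable {R : Type*} [CommRing R] [IsDomain R] {q : R}

theorem alternant_zero_ne_zero (hq : Function.Injective (q ^ · : ℕ → R)) (m : ℕ) :
    alternant q m 0 ≠ 0 :=
  Matrix.det_vandermonde_ne_zero_iff.2 fun i j h => Fin.ext (by
    have := hq (by simpa using h)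
    omega)

theorem sum_boxedPPs_mul_prod (hq : Function.Injective (q ^ · : ℕ → R)) (a b c : ℕ) :
    (∑ π ∈ boxedPPs a b c, q ^ ∑ i, ∑ j, π i j) *
        ∏ s ∈ range a, ∏ t ∈ range b, ∏ r ∈ range c, (1 - q ^ (s + t + r + 1)) =
      ∏ s ∈ range a, ∏ t ∈ range b, ∏ r ∈ range c, (1 - q ^ (s + t + r + 2)) := by
  set S := ∑ π ∈ boxedPPs a b c, q ^ ∑ i, ∑ j, π i j
  set X := ∏ s ∈ range a, ∏ r ∈ range c, (1 - q ^ (s + r + 1))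
  set Y := ∏ s ∈ range a, ∏ r ∈ range c, (1 - q ^ (s + r + b + 1))
  have hgen : S * q ^ (b * ∑ i ∈ range a, (a - 1 - i)) * alternant q (a + c) 0 =
      alternant q (a + c) (rect a b) := by
    rw [← gtGenFun_mul_alternant_zero q (rect_antitone a b) fun i hi => if_neg (by omega),
      ← sum_boxedPPs_eq_gtGenFun, sum_mul]
    simp_rw [pow_add]
  have hSX : S * X = Y := by
    have hq0 : q ≠ 0 := fun h => by simpa [h] using hq.ne (show 1 ≠ 2 by decide)
    refine mul_left_cancel₀ (mul_ne_zero (pow_ne_zero (b * ∑ i ∈ range a, (a - 1 - i)) hq0)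
      (alternant_zero_ne_zero hq (a + c))) ?_
    linear_combination X * hgen + alternant_rect_mul q a b c
  have htel : (∏ s ∈ range a, ∏ t ∈ range b, ∏ r ∈ range c, (1 - q ^ (s + t + r + 2))) * X =
      (∏ s ∈ range a, ∏ t ∈ range b, ∏ r ∈ range c, (1 - q ^ (s + t + r + 1))) * Y := by
    simp_rw [X, Y, prod_comm (s := range b) (t := range c), ← prod_mul_distrib]
    refine prod_congr rfl fun s _ => prod_congr rfl fun r _ => ?_
    convert prod_one_sub_pow_telescope q (s + r + 1) b using 3 <;> ring
  have hX : X ≠ 0 := prod_ne_zero_iff.2 fun s _ => prod_ne_zero_iff.2 fun r _ =>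
    one_sub_pow_ne_zero hq (by omega)
  refine mul_right_cancel₀ hX ?_
  linear_combination
    (∏ s ∈ range a, ∏ t ∈ range b, ∏ r ∈ range c, (1 - q ^ (s + t + r + 1))) * hSX - htel

end Domain

theorem Mbox_eq_sum_boxedPPs (a b c : ℕ) :
    Mbox a b c = ∑ π ∈ boxedPPs a b c, (X : PowerSeries ℚ) ^ ∑ i, ∑ j, π i j := by
  have hT : ∏ s ∈ range a, ∏ t ∈ range b, ∏ r ∈ range c,
      (1 - (X : PowerSeries ℚ) ^ (s + t + r + 1)) ≠ 0 :=
    prod_ne_zero_iff.2 fun s _ => prod_ne_zero_iff.2 fun t _ => prod_ne_zero_iff.2 fun r _ =>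
      one_sub_pow_ne_zero X_pow_injective (Nat.succ_ne_zero (s + t + r))
  refine mul_right_cancel₀ hT ?_
  rw [sum_boxedPPs_mul_prod X_pow_injective, Mbox]
  simp_rw [← prod_mul_distrib]
  refine prod_congr rfl fun s _ => prod_congr rfl fun t _ => prod_congr rfl fun r _ => ?_
  rw [mul_assoc, PowerSeries.inv_mul_cancel _ (by simp), mul_one]

end MacMahon

/-- MacMahon's boxed plane partition formula: `M_{a,b,c}(q)` is the generating
function for plane partitions in an `a × b × c` box, by number of boxes. -/
theorem macMahon_boxed (a b c n : ℕ) :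
    PowerSeries.coeff n (Mbox a b c) =
      Nat.card {π : Fin a → Fin b → ℕ //
        IsBoxedPP a b c π ∧ ∑ i, ∑ j, π i j = n} := by
  classical
  rw [MacMahon.Mbox_eq_sum_boxedPPs, map_sum]
  simp_rw [coeff_X_pow]
  rw [sum_boole, ← Nat.card_eq_finsetCard]
  exact congrArg _ (Nat.card_congr (Equiv.subtypeEquivRight fun π => by
    simp [MacMahon.mem_boxedPPs, eq_comm]))
end

section
/- If η = (η₁,η₂,η₃) is a triple of plane partitions satisfying Criterion 1, then η_in ∪ η_out (the set of boxes contained in at least two of η₁, η₂, η₃) is itself (the set of boxes of) a plane partition based at (a,b,c). -/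
open Finset

/-- The box `p = (i,j,k)` is in the intersection space: `i ≥ a`, `j ≥ b`, `k ≥ c`. -/
def InIntSpace (a b c : ℕ) (p : ℕ × ℕ × ℕ) : Prop :=
  a ≤ p.1 ∧ b ≤ p.2.1 ∧ c ≤ p.2.2

instance (a b c : ℕ) : DecidablePred (InIntSpace a b c) := fun _ =>
  inferInstanceAs (Decidable (_ ∧ _ ∧ _))

/-- `S` is (the set of boxes of) a plane partition based at `(u,v,w)`: a finite set of
unit boxes with coordinates at least the basepoint, downward closed toward the
basepoint. -/
def IsPPBasedAt (u v w : ℕ) (S : Finset (ℕ × ℕ × ℕ)) : Prop :=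
  ∀ p ∈ S, (u ≤ p.1 ∧ v ≤ p.2.1 ∧ w ≤ p.2.2) ∧
    ∀ q : ℕ × ℕ × ℕ, u ≤ q.1 → v ≤ q.2.1 → w ≤ q.2.2 →
      q.1 ≤ p.1 → q.2.1 ≤ p.2.1 → q.2.2 ≤ p.2.2 → q ∈ S

/-- Criterion 1: every box of the triple lying in the intersection space belongs to at
least two of the three plane partitions, i.e.
`η_int = (η₁ ∩ η₂) ∪ (η₁ ∩ η₃) ∪ (η₂ ∩ η₃)`. -/
def Criterion1 (a b c : ℕ) (η₁ η₂ η₃ : Finset (ℕ × ℕ × ℕ)) : Prop :=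
  ∀ p ∈ η₁ ∪ η₂ ∪ η₃, InIntSpace a b c p →
    (p ∈ η₁ ∧ p ∈ η₂) ∨ (p ∈ η₁ ∧ p ∈ η₃) ∨ (p ∈ η₂ ∧ p ∈ η₃)

/-- For a triple of plane partitions satisfying Criterion 1, the set
`η_in ∪ η_out` of boxes contained in at least two of `η₁, η₂, η₃` is itself a plane
partition based at `(a,b,c)`. -/
theorem in_union_out_is_plane_partition (a b c : ℕ) (η₁ η₂ η₃ : Finset (ℕ × ℕ × ℕ))
    (hη₁ : IsPPBasedAt 0 b c η₁) (hη₂ : IsPPBasedAt a 0 c η₂) (hη₃ : IsPPBasedAt a b 0 η₃)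
    (hC : Criterion1 a b c η₁ η₂ η₃) :
    IsPPBasedAt a b c ((η₁ ∩ η₂) ∪ (η₁ ∩ η₃) ∪ (η₂ ∩ η₃)) := by
  intro p hp
  simp only [mem_union, mem_inter] at hp
  rcases hp with (⟨h1, h2⟩ | ⟨h1, h3⟩) | ⟨h2, h3⟩
  · obtain ⟨⟨_, hb, hc⟩, hd1⟩ := hη₁ p h1
    obtain ⟨⟨ha, _, _⟩, hd2⟩ := hη₂ p h2
    refine ⟨⟨ha, hb, hc⟩, fun q hqa hqb hqc hq1 hq2 hq3 => ?_⟩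
    simp only [mem_union, mem_inter]
    exact Or.inl (Or.inl ⟨hd1 q (Nat.zero_le _) hqb hqc hq1 hq2 hq3,
      hd2 q hqa (Nat.zero_le _) hqc hq1 hq2 hq3⟩)
  · obtain ⟨⟨_, hb, hc⟩, hd1⟩ := hη₁ p h1
    obtain ⟨⟨ha, _, _⟩, hd3⟩ := hη₃ p h3
    refine ⟨⟨ha, hb, hc⟩, fun q hqa hqb hqc hq1 hq2 hq3 => ?_⟩
    simp only [mem_union, mem_inter]
    exact Or.inl (Or.inr ⟨hd1 q (Nat.zero_le _) hqb hqc hq1 hq2 hq3,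
      hd3 q hqa hqb (Nat.zero_le _) hq1 hq2 hq3⟩)
  · obtain ⟨⟨ha, _, hc⟩, hd2⟩ := hη₂ p h2
    obtain ⟨⟨_, hb, _⟩, hd3⟩ := hη₃ p h3
    refine ⟨⟨ha, hb, hc⟩, fun q hqa hqb hqc hq1 hq2 hq3 => ?_⟩
    simp only [mem_union, mem_inter]
    exact Or.inr ⟨hd2 q hqa (Nat.zero_le _) hqc hq1 hq2 hq3,
      hd3 q hqa hqb (Nat.zero_le _) hq1 hq2 hq3⟩
end

section
/- The sizes |R| = a+c, |G| = b+c, |B| = a+b of the three node groups satisfy the triangle inequality, and consequently there exists a unique planar tripartite pairing of the nodes: a perfect matching of the a+b+c+a+b+c nodes arranged in cyclic order (a red, c red, c green, b green, b blue, a blue) around a circle, such that matched nodes have different colors and no two matching chords cross; it pairs the a red nodes with the a blue nodes, the b blue with the b green, and the c red with the c green. -/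
open Finset

/-- Colors of the `2(a+b+c)` nodes in cyclic order: `a` red, `c` red, `c` green,
`b` green, `b` blue, `a` blue (red = 0, green = 1, blue = 2). -/
def nodeColor (a b c i : ℕ) : ℕ :=
  if i < a + c then 0 else if i < a + 2 * c + b then 1 else 2

/-- The explicit planar tripartite pairing: it pairs the `a` red nodes with the `a`
blue nodes, the `c` red nodes with the `c` green nodes, and the `b` green nodes with
the `b` blue nodes, in nested (non-crossing) fashion. -/
def sigmaPair (a b c i : ℕ) : ℕ :=
  if i < a then 2 * (a + b + c) - 1 - i
  else if i < a + 2 * c then 2 * (a + c) - 1 - i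
  else if i < a + 2 * c + 2 * b then 2 * (a + 2 * c + b) - 1 - i
  else 2 * (a + b + c) - 1 - i

/-- `f` is a planar tripartite pairing: a fixed-point-free involution of the nodes
(a perfect matching) in which matched nodes have different colors and no two matching
chords cross. -/
def IsPlanarTripartitePairing (a b c : ℕ)
    (f : Fin (2 * (a + b + c)) → Fin (2 * (a + b + c))) : Prop :=
  Function.Involutive f ∧ (∀ i, f i ≠ i) ∧
    (∀ i, nodeColor a b c (f i : ℕ) ≠ nodeColor a b c (i : ℕ)) ∧
    ¬ ∃ p q : Fin (2 * (a + b + c)), p < q ∧ q < f p ∧ f p < f q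

lemma card_filter_Ico (n u v : ℕ) (hv : v ≤ n) :
    ((Finset.univ : Finset (Fin n)).filter (fun i : Fin n => u ≤ (i:ℕ) ∧ (i:ℕ) < v)).card = v - u := by
  have himg : (((Finset.univ : Finset (Fin n)).filter (fun i : Fin n => u ≤ (i:ℕ) ∧ (i:ℕ) < v)).image Fin.val)
      = Finset.Ico u v := by
    ext x
    simp only [Finset.mem_image, Finset.mem_filter, Finset.mem_univ, true_and, Finset.mem_Ico]
    constructor
    · rintro ⟨i, ⟨h1, h2⟩, rfl⟩; exact ⟨h1, h2⟩
    · rintro ⟨h1, h2⟩; exact ⟨⟨x, by omega⟩, ⟨h1, h2⟩, rfl⟩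
  have h2 := Finset.card_image_of_injective
    (((Finset.univ : Finset (Fin n)).filter (fun i : Fin n => u ≤ (i:ℕ) ∧ (i:ℕ) < v))) (Fin.val_injective)
  rw [himg] at h2
  rw [← h2, Nat.card_Ico]

lemma split_card {n : ℕ} (P Q : Fin n → Prop) [DecidablePred P] [DecidablePred Q] :
    ((Finset.univ.filter (fun j => P j ∧ Q j)).card
      + (Finset.univ.filter (fun j => P j ∧ ¬ Q j)).card) = (Finset.univ.filter P).card := by
  rw [← Finset.filter_filter, ← Finset.filter_filter]
  exact Finset.card_filter_add_card_filter_not (fun j => Q j)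

lemma anti_formula {n : ℕ} (f : Fin n → Fin n) (u v m : ℕ) (hm : u + m ≤ n)
    (hmap : ∀ j : Fin n, u ≤ (j:ℕ) → (j:ℕ) < u+m → v ≤ (f j:ℕ) ∧ (f j:ℕ) < v+m)
    (hanti : ∀ j k : Fin n, u ≤ (j:ℕ) → (j:ℕ) < (k:ℕ) → (k:ℕ) < u+m → (f k:ℕ) < (f j:ℕ))
    (j : Fin n) (h1 : u ≤ (j:ℕ)) (h2 : (j:ℕ) < u+m) :
    (f j : ℕ) = u + v + m - 1 - (j:ℕ) := by
  have claim : ∀ d : ℕ, ∀ p q : Fin n, u ≤ (p:ℕ) → (q:ℕ) = (p:ℕ) + d → (q:ℕ) < u + m →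
      (f q:ℕ) + d ≤ (f p:ℕ) := by
    intro d
    induction d with
    | zero =>
      intro p q _ hq _
      have : q = p := Fin.ext (by omega)
      rw [this]; omega
    | succ d ih =>
      intro p q hp hq hqm
      have hr : (p:ℕ) + d < n := by omega
      have h3 := ih p ⟨(p:ℕ)+d, hr⟩ hp rfl (by simp; omega)
      have h4 := hanti ⟨(p:ℕ)+d, hr⟩ q (by simp; omega) (by simp; omega) hqm
      simp at h3 h4
      omega
  have hm1 : 1 ≤ m := by omega
  have htop : u + m - 1 < n := by omega
  have l1 := claim (u + m - 1 - (j:ℕ)) j ⟨u+m-1, htop⟩ h1 (by simp; omega) (by simp; omega)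
  have b1 := (hmap ⟨u+m-1, htop⟩ (by simp; omega) (by simp; omega)).1
  have hu : u < n := by omega
  have l2 := claim ((j:ℕ) - u) ⟨u, hu⟩ j (by simp) (by simp; omega) h2
  have b2 := (hmap ⟨u, hu⟩ (by simp) (by simp; omega)).2
  have b3 := (hmap j h1 h2).1
  have b4 := (hmap j h1 h2).2
  omega


lemma sigmaPair_lt (a b c i : ℕ) (hi : i < 2*(a+b+c)) : sigmaPair a b c i < 2*(a+b+c) := by
  unfold sigmaPair; split_ifs <;> omega

def sigmaFin (a b c : ℕ) : Fin (2*(a+b+c)) → Fin (2*(a+b+c)) :=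
  fun i => ⟨sigmaPair a b c i, sigmaPair_lt a b c i i.isLt⟩

lemma sigma_exists (a b c : ℕ) : IsPlanarTripartitePairing a b c (sigmaFin a b c) := by
  refine ⟨?_, ?_, ?_, ?_⟩
  · intro i
    apply Fin.ext
    show sigmaPair a b c (sigmaPair a b c i) = (i:ℕ)
    have hi := i.isLt
    unfold sigmaPair
    split_ifs <;> omega
  · intro i h
    have := congrArg Fin.val h
    have hi := i.isLt
    simp only [sigmaFin] at this
    unfold sigmaPair at this
    split_ifs at this <;> omega
  · intro i
    have hi := i.isLt
    show nodeColor a b c (sigmaPair a b c i) ≠ nodeColor a b c i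
    unfold sigmaPair nodeColor
    split_ifs <;> omega
  · rintro ⟨p, q, h1, h2, h3⟩
    rw [Fin.lt_def] at h1 h2 h3
    have hp := p.isLt
    have hq := q.isLt
    simp only [sigmaFin] at h2 h3
    unfold sigmaPair at h2 h3
    split_ifs at h2 h3 <;> omega

lemma key (a b c : ℕ) (f : Fin (2*(a+b+c)) → Fin (2*(a+b+c)))
    (H : IsPlanarTripartitePairing a b c f) :
    ∀ i : Fin (2*(a+b+c)), (f i : ℕ) = sigmaPair a b c (i : ℕ) := by
  obtain ⟨hinv, hne, hcol, hnc⟩ := H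
  have hnc' : ∀ p q : Fin (2*(a+b+c)), (p:ℕ) < (q:ℕ) → (q:ℕ) < (f p:ℕ) → (f p:ℕ) < (f q:ℕ) → False := by
    intro p q h1 h2 h3
    exact hnc ⟨p, q, Fin.lt_def.mpr h1, Fin.lt_def.mpr h2, Fin.lt_def.mpr h3⟩
  -- color lemmas
  have hred : ∀ i : Fin (2*(a+b+c)), (i:ℕ) < a+c → a+c ≤ (f i:ℕ) := by
    intro i hi
    have h := hcol i
    unfold nodeColor at h
    split_ifs at h <;> omega
  have hblue : ∀ i : Fin (2*(a+b+c)), a+2*c+b ≤ (i:ℕ) → (f i:ℕ) < a+2*c+b := by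
    intro i hi
    have h := hcol i
    unfold nodeColor at h
    split_ifs at h <;> omega
  have hgreen : ∀ i : Fin (2*(a+b+c)), a+c ≤ (i:ℕ) → (i:ℕ) < a+2*c+b →
      ((f i:ℕ) < a+c ∨ a+2*c+b ≤ (f i:ℕ)) := by
    intro i hi1 hi2
    have h := hcol i
    unfold nodeColor at h
    split_ifs at h <;> omega
  -- abbreviation for the ambient size
  -- cardinality bijections
  have hbij1 : (univ.filter (fun j : Fin (2*(a+b+c)) => (j:ℕ) < a+c ∧ (f j:ℕ) < a+2*c+b)).card
      = (univ.filter (fun j : Fin (2*(a+b+c)) => (a+c ≤ (j:ℕ) ∧ (j:ℕ) < a+2*c+b) ∧ (f j:ℕ) < a+c)).card := by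
    apply Finset.card_bij (fun j _ => f j)
    · intro j hj
      simp only [Finset.mem_filter, Finset.mem_univ, true_and] at hj ⊢
      obtain ⟨h1, h2⟩ := hj
      have h3 : (f (f j) : ℕ) = (j:ℕ) := by rw [hinv j]
      exact ⟨⟨hred j h1, h2⟩, by omega⟩
    · intro j1 hj1 j2 hj2 h
      exact hinv.injective h
    · intro j hj
      simp only [Finset.mem_filter, Finset.mem_univ, true_and] at hj
      obtain ⟨⟨h1, h2⟩, h3⟩ := hj
      have h4 : (f (f j) : ℕ) = (j:ℕ) := by rw [hinv j]
      refine ⟨f j, ?_, hinv j⟩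
      simp only [Finset.mem_filter, Finset.mem_univ, true_and]
      exact ⟨h3, by omega⟩
  have hbij2 : (univ.filter (fun j : Fin (2*(a+b+c)) => (j:ℕ) < a+c ∧ ¬ ((f j:ℕ) < a+2*c+b))).card
      = (univ.filter (fun j : Fin (2*(a+b+c)) => a+2*c+b ≤ (j:ℕ) ∧ ¬ (a+c ≤ (f j:ℕ)))).card := by
    apply Finset.card_bij (fun j _ => f j)
    · intro j hj
      simp only [Finset.mem_filter, Finset.mem_univ, true_and] at hj ⊢
      obtain ⟨h1, h2⟩ := hj
      have h3 : (f (f j) : ℕ) = (j:ℕ) := by rw [hinv j]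
      exact ⟨by omega, by omega⟩
    · intro j1 hj1 j2 hj2 h
      exact hinv.injective h
    · intro j hj
      simp only [Finset.mem_filter, Finset.mem_univ, true_and] at hj
      obtain ⟨h1, h2⟩ := hj
      have h4 : (f (f j) : ℕ) = (j:ℕ) := by rw [hinv j]
      refine ⟨f j, ?_, hinv j⟩
      simp only [Finset.mem_filter, Finset.mem_univ, true_and]
      exact ⟨by omega, by omega⟩
  have hbij3 : (univ.filter (fun j : Fin (2*(a+b+c)) => (a+c ≤ (j:ℕ) ∧ (j:ℕ) < a+2*c+b) ∧ ¬ ((f j:ℕ) < a+c))).card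
      = (univ.filter (fun j : Fin (2*(a+b+c)) => a+2*c+b ≤ (j:ℕ) ∧ a+c ≤ (f j:ℕ))).card := by
    apply Finset.card_bij (fun j _ => f j)
    · intro j hj
      simp only [Finset.mem_filter, Finset.mem_univ, true_and] at hj ⊢
      obtain ⟨⟨h1, h2⟩, h3⟩ := hj
      have h4 : (f (f j) : ℕ) = (j:ℕ) := by rw [hinv j]
      have h5 := hgreen j h1 h2
      exact ⟨by omega, by omega⟩
    · intro j1 hj1 j2 hj2 h
      exact hinv.injective h
    · intro j hj
      simp only [Finset.mem_filter, Finset.mem_univ, true_and] at hj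
      obtain ⟨h1, h2⟩ := hj
      have h4 : (f (f j) : ℕ) = (j:ℕ) := by rw [hinv j]
      have h5 := hblue j h1
      refine ⟨f j, ?_, hinv j⟩
      simp only [Finset.mem_filter, Finset.mem_univ, true_and]
      exact ⟨⟨h2, h5⟩, by omega⟩
  -- splits
  have s1 : (univ.filter (fun j : Fin (2*(a+b+c)) => (j:ℕ) < a+c ∧ (f j:ℕ) < a+2*c+b)).card
      + (univ.filter (fun j : Fin (2*(a+b+c)) => (j:ℕ) < a+c ∧ ¬ ((f j:ℕ) < a+2*c+b))).card
      = (univ.filter (fun j : Fin (2*(a+b+c)) => (j:ℕ) < a+c)).card := split_card _ _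
  have s2 : (univ.filter (fun j : Fin (2*(a+b+c)) => (a+c ≤ (j:ℕ) ∧ (j:ℕ) < a+2*c+b) ∧ (f j:ℕ) < a+c)).card
      + (univ.filter (fun j : Fin (2*(a+b+c)) => (a+c ≤ (j:ℕ) ∧ (j:ℕ) < a+2*c+b) ∧ ¬ ((f j:ℕ) < a+c))).card
      = (univ.filter (fun j : Fin (2*(a+b+c)) => a+c ≤ (j:ℕ) ∧ (j:ℕ) < a+2*c+b)).card := split_card _ _
  have s3 : (univ.filter (fun j : Fin (2*(a+b+c)) => a+2*c+b ≤ (j:ℕ) ∧ a+c ≤ (f j:ℕ))).card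
      + (univ.filter (fun j : Fin (2*(a+b+c)) => a+2*c+b ≤ (j:ℕ) ∧ ¬ (a+c ≤ (f j:ℕ)))).card
      = (univ.filter (fun j : Fin (2*(a+b+c)) => a+2*c+b ≤ (j:ℕ))).card := split_card _ _
  -- color class cards
  have cred : (univ.filter (fun j : Fin (2*(a+b+c)) => (j:ℕ) < a+c)).card = a+c := by
    have e : univ.filter (fun j : Fin (2*(a+b+c)) => (j:ℕ) < a+c)
        = univ.filter (fun j : Fin (2*(a+b+c)) => 0 ≤ (j:ℕ) ∧ (j:ℕ) < a+c) := by
      apply Finset.filter_congr; intro x _; simp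
    rw [e, card_filter_Ico _ _ _ (by omega)]; omega
  have cgreen : (univ.filter (fun j : Fin (2*(a+b+c)) => a+c ≤ (j:ℕ) ∧ (j:ℕ) < a+2*c+b)).card = c+b := by
    rw [card_filter_Ico _ _ _ (by omega)]; omega
  have cblue : (univ.filter (fun j : Fin (2*(a+b+c)) => a+2*c+b ≤ (j:ℕ))).card = b+a := by
    have e : univ.filter (fun j : Fin (2*(a+b+c)) => a+2*c+b ≤ (j:ℕ))
        = univ.filter (fun j : Fin (2*(a+b+c)) => a+2*c+b ≤ (j:ℕ) ∧ (j:ℕ) < 2*(a+b+c)) := by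
      apply Finset.filter_congr; intro x _
      simp only [iff_self_and]
      intro _; exact x.isLt
    rw [e, card_filter_Ico _ _ _ (by omega)]; omega
  have hGRcard : (univ.filter (fun j : Fin (2*(a+b+c)) => (a+c ≤ (j:ℕ) ∧ (j:ℕ) < a+2*c+b) ∧ (f j:ℕ) < a+c)).card = c := by
    omega
  have hRGcard : (univ.filter (fun j : Fin (2*(a+b+c)) => (j:ℕ) < a+c ∧ (f j:ℕ) < a+2*c+b)).card = c := by
    omega
  have hBGcard : (univ.filter (fun j : Fin (2*(a+b+c)) => a+2*c+b ≤ (j:ℕ) ∧ a+c ≤ (f j:ℕ))).card = b := by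
    omega
  -- interval characterizations
  have hGRint : ∀ j : Fin (2*(a+b+c)), a+c ≤ (j:ℕ) → (j:ℕ) < a+2*c+b →
      ((f j:ℕ) < a+c ↔ (j:ℕ) < a+2*c) := by
    have hdc : ∀ j k : Fin (2*(a+b+c)), a+c ≤ (j:ℕ) → (j:ℕ) < (k:ℕ) → (k:ℕ) < a+2*c+b →
        (f k:ℕ) < a+c → (f j:ℕ) < a+c := by
      intro j k hj hjk hk hfk
      by_contra hcon
      have hfj : a+2*c+b ≤ (f j:ℕ) := by
        rcases hgreen j hj (by omega) with h|h
        · omega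
        · exact h
      have hk2 : (f (f k) : ℕ) = (k:ℕ) := by rw [hinv k]
      exact hnc' (f k) j (by omega) (by omega) (by omega)
    intro j hj1 hj2
    constructor
    · intro hfj
      by_contra hcon
      push_neg at hcon
      have hsub : univ.filter (fun k : Fin (2*(a+b+c)) => a+c ≤ (k:ℕ) ∧ (k:ℕ) < a+2*c+1)
          ⊆ univ.filter (fun k : Fin (2*(a+b+c)) => (a+c ≤ (k:ℕ) ∧ (k:ℕ) < a+2*c+b) ∧ (f k:ℕ) < a+c) := by
        intro k hk
        simp only [Finset.mem_filter, Finset.mem_univ, true_and] at hk ⊢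
        obtain ⟨h1, h2⟩ := hk
        refine ⟨⟨h1, by omega⟩, ?_⟩
        rcases Nat.lt_or_ge (k:ℕ) (j:ℕ) with h|h
        · exact hdc k j h1 h hj2 hfj
        · have he : k = j := Fin.ext (by omega)
          rw [he]; exact hfj
      have hcc := Finset.card_le_card hsub
      rw [hGRcard, card_filter_Ico (2*(a+b+c)) (a+c) (a+2*c+1) (by omega)] at hcc
      omega
    · intro hj3
      by_contra hfj
      have hsub : univ.filter (fun k : Fin (2*(a+b+c)) => (a+c ≤ (k:ℕ) ∧ (k:ℕ) < a+2*c+b) ∧ (f k:ℕ) < a+c)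
          ⊆ univ.filter (fun k : Fin (2*(a+b+c)) => a+c ≤ (k:ℕ) ∧ (k:ℕ) < (j:ℕ)) := by
        intro k hk
        simp only [Finset.mem_filter, Finset.mem_univ, true_and] at hk ⊢
        obtain ⟨⟨h1, h2⟩, h3⟩ := hk
        refine ⟨h1, ?_⟩
        by_contra hkj
        push_neg at hkj
        rcases Nat.eq_or_lt_of_le hkj with he|hlt
        · exact hfj (by rw [show j = k from Fin.ext he]; exact h3)
        · exact hfj (hdc j k hj1 hlt h2 h3)
      have hcc := Finset.card_le_card hsub
      rw [hGRcard, card_filter_Ico (2*(a+b+c)) (a+c) ((j:ℕ)) (by omega)] at hcc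
      omega
  have hRGint : ∀ j : Fin (2*(a+b+c)), (j:ℕ) < a+c → ((f j:ℕ) < a+2*c+b ↔ a ≤ (j:ℕ)) := by
    have huc : ∀ j k : Fin (2*(a+b+c)), (j:ℕ) < (k:ℕ) → (k:ℕ) < a+c →
        (f j:ℕ) < a+2*c+b → (f k:ℕ) < a+2*c+b := by
      intro j k hjk hk hfj
      by_contra hcon
      push_neg at hcon
      have h1 := hred j (by omega)
      exact hnc' j k hjk (by omega) (by omega)
    intro j hj1
    constructor
    · intro hfj
      by_contra hcon
      push_neg at hcon
      have hsub : univ.filter (fun k : Fin (2*(a+b+c)) => (j:ℕ) ≤ (k:ℕ) ∧ (k:ℕ) < a+c)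
          ⊆ univ.filter (fun k : Fin (2*(a+b+c)) => (k:ℕ) < a+c ∧ (f k:ℕ) < a+2*c+b) := by
        intro k hk
        simp only [Finset.mem_filter, Finset.mem_univ, true_and] at hk ⊢
        obtain ⟨h1, h2⟩ := hk
        refine ⟨h2, ?_⟩
        rcases Nat.eq_or_lt_of_le h1 with he|hlt
        · rw [show k = j from Fin.ext he.symm]; exact hfj
        · exact huc j k hlt h2 hfj
      have hcc := Finset.card_le_card hsub
      rw [hRGcard, card_filter_Ico (2*(a+b+c)) ((j:ℕ)) (a+c) (by omega)] at hcc
      omega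
    · intro hj2
      by_contra hfj
      have hsub : univ.filter (fun k : Fin (2*(a+b+c)) => (k:ℕ) < a+c ∧ (f k:ℕ) < a+2*c+b)
          ⊆ univ.filter (fun k : Fin (2*(a+b+c)) => (j:ℕ)+1 ≤ (k:ℕ) ∧ (k:ℕ) < a+c) := by
        intro k hk
        simp only [Finset.mem_filter, Finset.mem_univ, true_and] at hk ⊢
        obtain ⟨h1, h2⟩ := hk
        refine ⟨?_, h1⟩
        by_contra hkj
        push_neg at hkj
        rcases Nat.eq_or_lt_of_le (show (k:ℕ) ≤ (j:ℕ) by omega) with he|hlt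
        · exact hfj (by rw [show j = k from Fin.ext he.symm]; exact h2)
        · exact hfj (huc k j hlt hj1 h2)
      have hcc := Finset.card_le_card hsub
      rw [hRGcard, card_filter_Ico (2*(a+b+c)) ((j:ℕ)+1) (a+c) (by omega)] at hcc
      omega
  have hBGint : ∀ j : Fin (2*(a+b+c)), a+2*c+b ≤ (j:ℕ) →
      (a+c ≤ (f j:ℕ) ↔ (j:ℕ) < a+2*c+2*b) := by
    have hdcB : ∀ j k : Fin (2*(a+b+c)), a+2*c+b ≤ (j:ℕ) → (j:ℕ) < (k:ℕ) →
        a+c ≤ (f k:ℕ) → a+c ≤ (f j:ℕ) := by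
      intro j k hj hjk hfk
      by_contra hcon
      push_neg at hcon
      have h1 := hblue k (by omega)
      have hj2 : (f (f j) : ℕ) = (j:ℕ) := by rw [hinv j]
      have hk2 : (f (f k) : ℕ) = (k:ℕ) := by rw [hinv k]
      exact hnc' (f j) (f k) (by omega) (by omega) (by omega)
    intro j hj1
    constructor
    · intro hfj
      by_contra hcon
      push_neg at hcon
      have hsub : univ.filter (fun k : Fin (2*(a+b+c)) => a+2*c+b ≤ (k:ℕ) ∧ (k:ℕ) < (j:ℕ)+1)
          ⊆ univ.filter (fun k : Fin (2*(a+b+c)) => a+2*c+b ≤ (k:ℕ) ∧ a+c ≤ (f k:ℕ)) := by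
        intro k hk
        simp only [Finset.mem_filter, Finset.mem_univ, true_and] at hk ⊢
        obtain ⟨h1, h2⟩ := hk
        refine ⟨h1, ?_⟩
        rcases Nat.lt_or_ge (k:ℕ) (j:ℕ) with h|h
        · exact hdcB k j h1 h hfj
        · rw [show k = j from Fin.ext (by omega)]; exact hfj
      have hcc := Finset.card_le_card hsub
      rw [hBGcard, card_filter_Ico (2*(a+b+c)) (a+2*c+b) ((j:ℕ)+1) (by omega)] at hcc
      omega
    · intro hj2
      by_contra hfj
      push_neg at hfj
      have hsub : univ.filter (fun k : Fin (2*(a+b+c)) => a+2*c+b ≤ (k:ℕ) ∧ a+c ≤ (f k:ℕ))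
          ⊆ univ.filter (fun k : Fin (2*(a+b+c)) => a+2*c+b ≤ (k:ℕ) ∧ (k:ℕ) < (j:ℕ)) := by
        intro k hk
        simp only [Finset.mem_filter, Finset.mem_univ, true_and] at hk ⊢
        obtain ⟨h1, h2⟩ := hk
        refine ⟨h1, ?_⟩
        by_contra hkj
        push_neg at hkj
        rcases Nat.eq_or_lt_of_le hkj with he|hlt
        · have : (f j:ℕ) = (f k:ℕ) := by rw [show j = k from Fin.ext he]
          omega
        · have := hdcB j k hj1 hlt h2
          omega
      have hcc := Finset.card_le_card hsub
      rw [hBGcard, card_filter_Ico (2*(a+b+c)) (a+2*c+b) ((j:ℕ)) (by omega)] at hcc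
      omega
  -- region maps and explicit formulas
  have hL1 : ∀ j : Fin (2*(a+b+c)), a ≤ (j:ℕ) → (j:ℕ) < a+c →
      a+c ≤ (f j:ℕ) ∧ (f j:ℕ) < (a+c)+c := by
    intro j h1 h2
    have h3 := hred j h2
    have h4 := (hRGint j h2).mpr h1
    have h5 : (f (f j):ℕ) = (j:ℕ) := by rw [hinv j]
    have h6 := (hGRint (f j) h3 h4).mp (by omega)
    exact ⟨h3, by omega⟩
  have hF1 : ∀ j : Fin (2*(a+b+c)), a ≤ (j:ℕ) → (j:ℕ) < a+c →
      (f j:ℕ) = a+(a+c)+c-1-(j:ℕ) := by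
    intro j h1 h2
    refine anti_formula f a (a+c) c (by omega) (fun k hk1 hk2 => hL1 k hk1 (by omega)) ?_ j h1 (by omega)
    intro k l hk hkl hl
    by_contra hcon
    push_neg at hcon
    have h3 := hL1 k hk (by omega)
    have h4 := hL1 l (by omega) (by omega)
    have hne' : (f k:ℕ) ≠ (f l:ℕ) := by
      intro he
      have h5 : k = l := hinv.injective (Fin.val_injective he)
      have h6 := congrArg Fin.val h5
      omega
    exact hnc' k l hkl (by omega) (by omega)
  have hF2 : ∀ j : Fin (2*(a+b+c)), a+c ≤ (j:ℕ) → (j:ℕ) < a+2*c →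
      (f j:ℕ) = a+(a+c)+c-1-(j:ℕ) := by
    intro j h1 h2
    have h3 := (hGRint j h1 (by omega)).mpr h2
    have h5 : (f (f j):ℕ) = (j:ℕ) := by rw [hinv j]
    have h4 : a ≤ (f j:ℕ) := (hRGint (f j) h3).mp (by omega)
    have h6 := hF1 (f j) h4 h3
    omega
  have hL2 : ∀ j : Fin (2*(a+b+c)), a+2*c ≤ (j:ℕ) → (j:ℕ) < (a+2*c)+b →
      a+2*c+b ≤ (f j:ℕ) ∧ (f j:ℕ) < (a+2*c+b)+b := by
    intro j h1 h2
    have h3 : ¬ ((f j:ℕ) < a+c) := by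
      intro hx
      have := (hGRint j (by omega) (by omega)).mp hx
      omega
    have h4 : a+2*c+b ≤ (f j:ℕ) := by
      rcases hgreen j (by omega) (by omega) with h|h
      · omega
      · exact h
    have h5 : (f (f j):ℕ) = (j:ℕ) := by rw [hinv j]
    have h6 := (hBGint (f j) h4).mp (by omega)
    exact ⟨h4, by omega⟩
  have hF3 : ∀ j : Fin (2*(a+b+c)), a+2*c ≤ (j:ℕ) → (j:ℕ) < a+2*c+b →
      (f j:ℕ) = (a+2*c)+(a+2*c+b)+b-1-(j:ℕ) := by
    intro j h1 h2
    refine anti_formula f (a+2*c) (a+2*c+b) b (by omega)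
      (fun k hk1 hk2 => hL2 k hk1 hk2) ?_ j h1 (by omega)
    intro k l hk hkl hl
    by_contra hcon
    push_neg at hcon
    have h3 := hL2 k hk (by omega)
    have h4 := hL2 l (by omega) (by omega)
    have hne' : (f k:ℕ) ≠ (f l:ℕ) := by
      intro he
      have h5 : k = l := hinv.injective (Fin.val_injective he)
      have h6 := congrArg Fin.val h5
      omega
    exact hnc' k l hkl (by omega) (by omega)
  have hF4 : ∀ j : Fin (2*(a+b+c)), a+2*c+b ≤ (j:ℕ) → (j:ℕ) < a+2*c+2*b →
      (f j:ℕ) = (a+2*c)+(a+2*c+b)+b-1-(j:ℕ) := by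
    intro j h1 h2
    have h3 := (hBGint j h1).mpr h2
    have h4 := hblue j h1
    have h5 : (f (f j):ℕ) = (j:ℕ) := by rw [hinv j]
    have h6 : a+2*c ≤ (f j:ℕ) := by
      by_contra hx
      push_neg at hx
      have := (hGRint (f j) h3 (by omega)).mpr hx
      omega
    have h7 := hF3 (f j) h6 (by omega)
    omega
  have hL3 : ∀ j : Fin (2*(a+b+c)), 0 ≤ (j:ℕ) → (j:ℕ) < 0+a →
      a+2*c+2*b ≤ (f j:ℕ) ∧ (f j:ℕ) < (a+2*c+2*b)+a := by
    intro j _ h1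
    have h2 : ¬((f j:ℕ) < a+2*c+b) := by
      intro hx
      have := (hRGint j (by omega)).mp hx
      omega
    have h5 : (f (f j):ℕ) = (j:ℕ) := by rw [hinv j]
    have h3 : ¬((f j:ℕ) < a+2*c+2*b) := by
      intro hx
      have h4 := (hBGint (f j) (by omega)).mpr hx
      omega
    have h6 := (f j).isLt
    exact ⟨by omega, by omega⟩
  have hF5 : ∀ j : Fin (2*(a+b+c)), (j:ℕ) < a →
      (f j:ℕ) = 0+(a+2*c+2*b)+a-1-(j:ℕ) := by
    intro j h1
    refine anti_formula f 0 (a+2*c+2*b) a (by omega)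
      (fun k hk1 hk2 => hL3 k hk1 hk2) ?_ j (by omega) (by omega)
    intro k l hk hkl hl
    by_contra hcon
    push_neg at hcon
    have h3 := hL3 k (by omega) (by omega)
    have h4 := hL3 l (by omega) (by omega)
    have hne' : (f k:ℕ) ≠ (f l:ℕ) := by
      intro he
      have h5 : k = l := hinv.injective (Fin.val_injective he)
      have h6 := congrArg Fin.val h5
      omega
    exact hnc' k l hkl (by omega) (by omega)
  have hF6 : ∀ j : Fin (2*(a+b+c)), a+2*c+2*b ≤ (j:ℕ) →
      (f j:ℕ) = 0+(a+2*c+2*b)+a-1-(j:ℕ) := by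
    intro j h1
    have hj := j.isLt
    have h3 : ¬(a+c ≤ (f j:ℕ)) := by
      intro hx
      have := (hBGint j (by omega)).mp hx
      omega
    push_neg at h3
    have h5 : (f (f j):ℕ) = (j:ℕ) := by rw [hinv j]
    have h6 : (f j:ℕ) < a := by
      by_contra hx
      push_neg at hx
      have := hL1 (f j) hx h3
      omega
    have h7 := hF5 (f j) h6
    omega
  -- final case analysis
  intro i
  have hi := i.isLt
  rcases Nat.lt_or_ge (i:ℕ) a with h0|h0
  · have h := hF5 i h0
    unfold sigmaPair
    split_ifs <;> omega
  rcases Nat.lt_or_ge (i:ℕ) (a+c) with h1|h1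
  · have h := hF1 i h0 h1
    unfold sigmaPair
    split_ifs <;> omega
  rcases Nat.lt_or_ge (i:ℕ) (a+2*c) with h2|h2
  · have h := hF2 i h1 h2
    unfold sigmaPair
    split_ifs <;> omega
  rcases Nat.lt_or_ge (i:ℕ) (a+2*c+b) with h3|h3
  · have h := hF3 i h2 h3
    unfold sigmaPair
    split_ifs <;> omega
  rcases Nat.lt_or_ge (i:ℕ) (a+2*c+2*b) with h4|h4
  · have h := hF4 i h3 h4
    unfold sigmaPair
    split_ifs <;> omega
  · have h := hF6 i h4
    unfold sigmaPair
    split_ifs <;> omega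


/-- The group sizes `a+c`, `b+c`, `a+b` satisfy the triangle inequality, and there is
a unique planar tripartite pairing of the nodes; it pairs the `a` red nodes with the
`a` blue nodes, the `b` blue with the `b` green, and the `c` red with the `c` green. -/
theorem planar_tripartite_pairing (a b c : ℕ) :
    ((a + c ≤ (b + c) + (a + b)) ∧ (b + c ≤ (a + c) + (a + b)) ∧
        (a + b ≤ (a + c) + (b + c))) ∧
      (∃! f : Fin (2 * (a + b + c)) → Fin (2 * (a + b + c)),
        IsPlanarTripartitePairing a b c f) ∧
      (∀ f : Fin (2 * (a + b + c)) → Fin (2 * (a + b + c)),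
        IsPlanarTripartitePairing a b c f → ∀ i, (f i : ℕ) = sigmaPair a b c (i : ℕ)) := by
  refine ⟨⟨by omega, by omega, by omega⟩, ?_, fun f H => key a b c f H⟩
  refine ⟨sigmaFin a b c, sigma_exists a b c, fun g hg => funext fun i => Fin.ext ?_⟩
  rw [key a b c g hg i]
  rfl
end
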